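/- Let (a_k) be a real sequence with a_{k+1} - a_k > δ for all k and some δ > 0. Then the generalized discrete Hilbert transform (G_a ξ)(n) = Σ_{k≠n} ξ_k/(a_k - a_n) is bounded on ℓ²(ℕ) with norm at most (1/δ)(2π²/3 + 2‖G‖), where ‖G‖ is the norm of the standard discrete Hilbert transform. -/

import Mathlib

/-!
Round `a k - a 0` up to the grid `δ ℕ`: the indices `f k = ⌈(a k - a 0) / δ⌉₊` increase strictly,
so `|k - n| ≤ |f k - f n|`, and `δ (f k - f n)` differs from `a k - a n` by less than `δ`. Hence
`1 / (a k - a n) = δ⁻¹ / (f k - f n) + ρ n k` with `|ρ n k| ≤ δ⁻¹ / (k - n) ^ 2`.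
The first kernel is the compression of `G` along the injection `f`, of norm at most `‖G‖`.
The second has row and column sums at most `δ⁻¹ ∑_{j ≠ 0} j⁻² = δ⁻¹ π² / 3`, so by Schur's test
it defines an operator of norm at most `δ⁻¹ π² / 3`. Altogether `‖G_a‖ ≤ δ⁻¹ (π² / 3 + ‖G‖)`.
-/

open scoped Real NNReal ENNReal
open Finset Filter Topology

theorem tsum_sq_le_tsum_mul_tsum_of_sq_le_mul {ι : Type*} {r f g : ι → ℝ} (hr : Summable r)
    (hf : Summable f) (hg : Summable g) (hf0 : ∀ i, 0 ≤ f i) (hg0 : ∀ i, 0 ≤ g i)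
    (h : ∀ i, r i ^ 2 ≤ f i * g i) : (∑' i, r i) ^ 2 ≤ (∑' i, f i) * ∑' i, g i :=
  le_of_tendsto_of_tendsto' (hr.hasSum.pow 2) (Tendsto.mul hf.hasSum hg.hasSum) fun s =>
    sum_sq_le_sum_mul_sum_of_sq_le_mul s (fun i _ => hf0 i) (fun i _ => hg0 i) fun i _ => h i

theorem summable_mul_of_summable_norm_sq {ι 𝕜 : Type*} [NormedRing 𝕜] [CompleteSpace 𝕜]
    {g ξ : ι → 𝕜} (hg : Summable fun i => ‖g i‖ ^ 2) (hξ : Summable fun i => ‖ξ i‖ ^ 2) :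
    Summable fun i => g i * ξ i :=
  .of_norm_bounded ((hg.add hξ).div_const 2) fun i =>
    (norm_mul_le _ _).trans (by nlinarith [sq_nonneg (‖g i‖ - ‖ξ i‖)])

-- The term `k = n` on the right is `0⁻¹ * η n = 0`.
theorem tsum_ne_div_sub_eq_tsum {β 𝕜 : Type*} [Field 𝕜] [TopologicalSpace 𝕜] (x η : β → 𝕜)
    (n : β) : ∑' k : {k // k ≠ n}, η k / (x k - x n) = ∑' k, (x k - x n)⁻¹ * η k := by
  simp only [div_eq_inv_mul]
  exact tsum_subtype_eq_of_support_subset (f := fun k => (x k - x n)⁻¹ * η k) (s := {k | k ≠ n})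
    fun _ hk hkn => hk (by simp [hkn])

theorem mul_sub_le_sub_of_forall_le_sub_succ {u : ℕ → ℝ} {c : ℝ} (h : ∀ k, c ≤ u (k + 1) - u k)
    {n k : ℕ} (hnk : n ≤ k) : c * ((k : ℝ) - n) ≤ u k - u n := by
  induction k, hnk using Nat.le_induction with
  | base => simp
  | succ k _ ih => push_cast; linarith [h k]

theorem mul_abs_sub_le_abs_sub_of_forall_le_sub_succ {u : ℕ → ℝ} {c : ℝ}
    (h : ∀ k, c ≤ u (k + 1) - u k) (k n : ℕ) : c * |(k : ℝ) - n| ≤ |u k - u n| := by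
  rcases le_total n k with hnk | hkn
  · rw [abs_of_nonneg (by simpa using hnk)]
    exact (mul_sub_le_sub_of_forall_le_sub_succ h hnk).trans (le_abs_self _)
  · rw [abs_sub_comm, abs_sub_comm (u k), abs_of_nonneg (by simpa using hkn)]
    exact (mul_sub_le_sub_of_forall_le_sub_succ h hkn).trans (le_abs_self _)

theorem abs_inv_sub_inv_le {x y c d : ℝ} (hc : 0 < c) (hx : c ≤ |x|) (hy : c ≤ |y|)
    (hxy : |y - x| ≤ d) : |x⁻¹ - y⁻¹| ≤ d / c ^ 2 := by
  have hx0 : x ≠ 0 := abs_pos.mp (hc.trans_le hx)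
  have hy0 : y ≠ 0 := abs_pos.mp (hc.trans_le hy)
  rw [inv_sub_inv hx0 hy0, abs_div, abs_mul, sq]
  exact div_le_div₀ ((abs_nonneg _).trans hxy) hxy (by positivity)
    (mul_le_mul hx hy hc.le (abs_nonneg _))

theorem hasSum_int_inv_sq : HasSum (fun j : ℤ => ((j : ℝ) ^ 2)⁻¹) (π ^ 2 / 3) := by
  have h : HasSum (fun n : ℕ => (((n : ℤ) : ℝ) ^ 2)⁻¹) (π ^ 2 / 6) := by
    simpa only [Int.cast_natCast, one_div] using hasSum_zeta_two
  have h' : HasSum (fun n : ℕ => (((-n : ℤ) : ℝ) ^ 2)⁻¹) (π ^ 2 / 6) := by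
    simpa only [Int.cast_neg, Int.cast_natCast, neg_sq, one_div] using hasSum_zeta_two
  have := HasSum.of_nat_of_neg (f := fun j : ℤ => ((j : ℝ) ^ 2)⁻¹) h h'
  rwa [show π ^ 2 / 6 + π ^ 2 / 6 - (((0 : ℤ) : ℝ) ^ 2)⁻¹ = π ^ 2 / 3 by norm_num; ring] at this

theorem sum_inv_sq_sub_le (n : ℕ) (s : Finset ℕ) : ∑ k ∈ s, (((k : ℝ) - n) ^ 2)⁻¹ ≤ π ^ 2 / 3 := by
  let e : ℕ ↪ ℤ := ⟨fun k => k - n, fun i j h => by simpa using h⟩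
  calc ∑ k ∈ s, (((k : ℝ) - n) ^ 2)⁻¹ = ∑ j ∈ s.map e, ((j : ℝ) ^ 2)⁻¹ := by
        rw [sum_map]
        exact sum_congr rfl fun k _ => by show _ = ((((k - n : ℤ)) : ℝ) ^ 2)⁻¹; push_cast; rfl
    _ ≤ π ^ 2 / 3 := sum_le_hasSum _ (fun _ _ => by positivity) hasSum_int_inv_sq

theorem norm_extend_zero_rpow {E ι κ : Type*} [NormedAddCommGroup E] {f : ι → κ} {r : ℝ}
    (hr : r ≠ 0) (ξ : ι → E) (j : κ) :
    ‖Function.extend f ξ 0 j‖ ^ r = Function.extend f (fun i => ‖ξ i‖ ^ r) 0 j := by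
  rw [Function.apply_extend (fun x : E => ‖x‖ ^ r)]
  congr
  funext j
  simp [Real.zero_rpow hr]

namespace lp

section Compress

variable {𝕜 E ι κ : Type*} [NontriviallyNormedField 𝕜] [NormedAddCommGroup E] [NormedSpace 𝕜 E]
  {p : ℝ≥0∞} [Fact (1 ≤ p)] {f : ι → κ}

noncomputable def compInjective (hp : 0 < p.toReal) (hf : f.Injective) :
    lp (fun _ : κ => E) p →L[𝕜] lp (fun _ : ι => E) p :=
  LinearMap.mkContinuous
    { toFun := fun η => ⟨η ∘ f, memℓp_gen <| ((lp.memℓp η).summable hp).comp_injective hf⟩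
      map_add' := fun _ _ => rfl
      map_smul' := fun _ _ => rfl } 1 fun η => by
    rw [one_mul]
    refine lp.norm_le_of_tsum_le hp (norm_nonneg η) ?_
    rw [lp.norm_rpow_eq_tsum hp]
    exact tsum_comp_le_tsum_of_inj ((lp.memℓp η).summable hp) (fun _ => by positivity) hf

noncomputable def extendByZero (hp : 0 < p.toReal) (hf : f.Injective) :
    lp (fun _ : ι => E) p →L[𝕜] lp (fun _ : κ => E) p :=
  LinearMap.mkContinuous
    { toFun := fun ξ => ⟨Function.extend f ξ 0, memℓp_gen <| by
        simpa only [norm_extend_zero_rpow hp.ne'] using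
          (summable_extend_zero hf).2 ((lp.memℓp ξ).summable hp)⟩
      map_add' := fun ξ η => by
        ext j
        show Function.extend f (ξ + η : ι → E) 0 j = Function.extend f ξ 0 j + Function.extend f η 0 j
        simpa using congrFun (Function.extend_add f (ξ : ι → E) η 0 0) j
      map_smul' := fun c ξ => by
        ext j
        simpa using congrFun (Function.extend_smul c f (ξ : ι → E) 0) j } 1 fun ξ => by
    rw [one_mul]
    refine lp.norm_le_of_tsum_le hp (norm_nonneg ξ) ?_
    show ∑' j, ‖Function.extend f ξ 0 j‖ ^ p.toReal ≤ _
    simp only [norm_extend_zero_rpow hp.ne', lp.norm_rpow_eq_tsum hp]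
    rw [tsum_extend_zero hf]

theorem extendByZero_apply (hp : 0 < p.toReal) (hf : f.Injective) (ξ : lp (fun _ : ι => E) p)
    (j : κ) : extendByZero (𝕜 := 𝕜) hp hf ξ j = Function.extend f ξ 0 j := rfl

noncomputable def compress (hp : 0 < p.toReal) (hf : f.Injective)
    (T : lp (fun _ : κ => E) p →L[𝕜] lp (fun _ : κ => E) p) :
    lp (fun _ : ι => E) p →L[𝕜] lp (fun _ : ι => E) p :=
  (compInjective hp hf).comp (T.comp (extendByZero hp hf))

theorem compress_apply (hp : 0 < p.toReal) (hf : f.Injective)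
    (T : lp (fun _ : κ => E) p →L[𝕜] lp (fun _ : κ => E) p) (ξ : lp (fun _ : ι => E) p) (i : ι) :
    compress hp hf T ξ i = T (extendByZero (𝕜 := 𝕜) hp hf ξ) (f i) := rfl

theorem norm_compress_le (hp : 0 < p.toReal) (hf : f.Injective)
    (T : lp (fun _ : κ => E) p →L[𝕜] lp (fun _ : κ => E) p) : ‖compress hp hf T‖ ≤ ‖T‖ :=
  calc ‖compress hp hf T‖
      ≤ ‖compInjective (𝕜 := 𝕜) (E := E) hp hf‖ *
          (‖T‖ * ‖extendByZero (𝕜 := 𝕜) (E := E) hp hf‖) :=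
        (ContinuousLinearMap.opNorm_comp_le _ _).trans
          (mul_le_mul_of_nonneg_left (ContinuousLinearMap.opNorm_comp_le _ _) (norm_nonneg _))
    _ ≤ 1 * (‖T‖ * 1) := by
        gcongr
        · exact LinearMap.mkContinuous_norm_le _ zero_le_one _
        · exact LinearMap.mkContinuous_norm_le _ zero_le_one _
    _ = ‖T‖ := by ring

theorem compress_apply_of_kernel (hp : 0 < p.toReal) (hf : f.Injective)
    {T : lp (fun _ : κ => 𝕜) p →L[𝕜] lp (fun _ : κ => 𝕜) p} {K : κ → κ → 𝕜}
    (hT : ∀ η j, T η j = ∑' i, K j i * η i) (ξ : lp (fun _ : ι => 𝕜) p) (n : ι) :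
    compress hp hf T ξ n = ∑' k, K (f n) (f k) * ξ k := by
  rw [compress_apply, hT, ← hf.tsum_eq]
  · simp only [extendByZero_apply, hf.extend_apply]
  · intro j hj
    by_contra h
    exact hj (by simp [extendByZero_apply, Function.extend_apply' _ _ _ h])

end Compress

section L2

variable {E ι : Type*} [NormedAddCommGroup E]

theorem summable_norm_sq (ξ : lp (fun _ : ι => E) 2) : Summable fun i => ‖ξ i‖ ^ 2 := by
  simpa using (lp.memℓp ξ).summable (by norm_num : 0 < (2 : ℝ≥0∞).toReal)

theorem norm_sq_eq_tsum_norm_sq (ξ : lp (fun _ : ι => E) 2) : ‖ξ‖ ^ 2 = ∑' i, ‖ξ i‖ ^ 2 := by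
  simpa using lp.norm_rpow_eq_tsum (by norm_num : 0 < (2 : ℝ≥0∞).toReal) ξ

end L2

end lp

section Schur

variable {𝕜 ι κ : Type*} [NontriviallyNormedField 𝕜] {K : κ → ι → 𝕜} {C : ℝ}

theorem summable_norm_kernel_mul (hrow : ∀ n (s : Finset ι), ∑ k ∈ s, ‖K n k‖ ≤ C) (n : κ)
    {g : ι → ℝ} {M : ℝ} (hg0 : ∀ k, 0 ≤ g k) (hgM : ∀ k, g k ≤ M) :
    Summable fun k => ‖K n k‖ * g k :=
  .of_nonneg_of_le (fun k => mul_nonneg (norm_nonneg _) (hg0 k))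
    (fun k => mul_le_mul_of_nonneg_left (hgM k) (norm_nonneg _))
    ((summable_of_sum_le (fun _ => norm_nonneg _) (hrow n)).mul_right M)

theorem norm_tsum_kernel_mul_sq_le (hrow : ∀ n (s : Finset ι), ∑ k ∈ s, ‖K n k‖ ≤ C)
    (ξ : lp (fun _ : ι => 𝕜) 2) (n : κ) :
    ‖∑' k, K n k * ξ k‖ ^ 2 ≤ C * ∑' k, ‖K n k‖ * ‖ξ k‖ ^ 2 := by
  have hK : Summable fun k => ‖K n k‖ := summable_of_sum_le (fun _ => norm_nonneg _) (hrow n)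
  have hKξ := summable_norm_kernel_mul hrow n (fun k => norm_nonneg (ξ k))
    (lp.norm_apply_le_norm two_ne_zero ξ)
  have hKξ2 := summable_norm_kernel_mul hrow n (fun k => sq_nonneg ‖ξ k‖)
    fun k => pow_le_pow_left₀ (norm_nonneg _) (lp.norm_apply_le_norm two_ne_zero ξ k) 2
  calc ‖∑' k, K n k * ξ k‖ ^ 2 ≤ (∑' k, ‖K n k‖ * ‖ξ k‖) ^ 2 := by
        gcongr
        refine (norm_tsum_le_tsum_norm ?_).trans_eq ?_ <;> simp only [norm_mul]
        exact hKξ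
    _ ≤ (∑' k, ‖K n k‖) * ∑' k, ‖K n k‖ * ‖ξ k‖ ^ 2 :=
        tsum_sq_le_tsum_mul_tsum_of_sq_le_mul hKξ hK hKξ2 (fun _ => norm_nonneg _)
          (fun _ => by positivity) fun k => le_of_eq (by ring)
    _ ≤ C * ∑' k, ‖K n k‖ * ‖ξ k‖ ^ 2 := by
        gcongr
        exact hK.tsum_le_of_sum_le (hrow n)

theorem sum_norm_tsum_kernel_mul_sq_le (hrow : ∀ n (s : Finset ι), ∑ k ∈ s, ‖K n k‖ ≤ C)
    (hcol : ∀ k (s : Finset κ), ∑ n ∈ s, ‖K n k‖ ≤ C) (hC : 0 ≤ C)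
    (ξ : lp (fun _ : ι => 𝕜) 2) (s : Finset κ) :
    ∑ n ∈ s, ‖∑' k, K n k * ξ k‖ ^ 2 ≤ (C * ‖ξ‖) ^ 2 := by
  have hKξ2 (n : κ) := summable_norm_kernel_mul hrow n (fun k => sq_nonneg ‖ξ k‖)
    fun k => pow_le_pow_left₀ (norm_nonneg _) (lp.norm_apply_le_norm two_ne_zero ξ k) 2
  calc ∑ n ∈ s, ‖∑' k, K n k * ξ k‖ ^ 2
      ≤ ∑ n ∈ s, C * ∑' k, ‖K n k‖ * ‖ξ k‖ ^ 2 :=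
        sum_le_sum fun n _ => norm_tsum_kernel_mul_sq_le hrow ξ n
    _ = C * ∑' k, (∑ n ∈ s, ‖K n k‖) * ‖ξ k‖ ^ 2 := by
        rw [← mul_sum, ← Summable.tsum_finsetSum fun n _ => hKξ2 n]
        simp only [sum_mul]
    _ ≤ C * ∑' k, C * ‖ξ k‖ ^ 2 := by
        refine mul_le_mul_of_nonneg_left (Summable.tsum_le_tsum (fun k => ?_)
          (by simpa only [sum_mul] using summable_sum fun n _ => hKξ2 n)
          ((lp.summable_norm_sq ξ).mul_left C)) hC
        exact mul_le_mul_of_nonneg_right (hcol k s) (by positivity)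
    _ = (C * ‖ξ‖) ^ 2 := by
        rw [tsum_mul_left, ← lp.norm_sq_eq_tsum_norm_sq]; ring

theorem lp.exists_hasSum_kernel_of_schur [CompleteSpace 𝕜]
    (hrow : ∀ n (s : Finset ι), ∑ k ∈ s, ‖K n k‖ ≤ C)
    (hcol : ∀ k (s : Finset κ), ∑ n ∈ s, ‖K n k‖ ≤ C) (hC : 0 ≤ C) :
    ∃ T : lp (fun _ : ι => 𝕜) 2 →L[𝕜] lp (fun _ : κ => 𝕜) 2,
      ‖T‖ ≤ C ∧ ∀ ξ n, HasSum (fun k => K n k * ξ k) (T ξ n) := by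
  have hsum (ξ : lp (fun _ : ι => 𝕜) 2) (n : κ) : Summable fun k => K n k * ξ k :=
    .of_norm <| by simpa only [norm_mul] using (summable_norm_kernel_mul hrow n
      (fun k => norm_nonneg (ξ k)) (lp.norm_apply_le_norm two_ne_zero ξ))
  have hbound (ξ : lp (fun _ : ι => 𝕜) 2) (s : Finset κ) :
      ∑ n ∈ s, ‖∑' k, K n k * ξ k‖ ^ (2 : ℝ≥0∞).toReal ≤ (C * ‖ξ‖) ^ (2 : ℝ≥0∞).toReal := by
    simpa using sum_norm_tsum_kernel_mul_sq_le hrow hcol hC ξ s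
  let T : lp (fun _ : ι => 𝕜) 2 →ₗ[𝕜] lp (fun _ : κ => 𝕜) 2 :=
    { toFun := fun ξ => ⟨fun n => ∑' k, K n k * ξ k, memℓp_gen' (hbound ξ)⟩
      map_add' := fun ξ η => by
        ext n
        show ∑' k, K n k * (ξ k + η k) = ∑' k, K n k * ξ k + ∑' k, K n k * η k
        simp only [mul_add, (hsum ξ n).tsum_add (hsum η n)]
      map_smul' := fun c ξ => by
        ext n
        show ∑' k, K n k * (c * ξ k) = c * ∑' k, K n k * ξ k
        simp only [← tsum_mul_left, mul_left_comm] }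
  exact ⟨T.mkContinuous C fun ξ => lp.norm_le_of_forall_sum_le (by norm_num) (by positivity)
    (hbound ξ), T.mkContinuous_norm_le hC _, fun ξ n => (hsum ξ n).hasSum⟩

end Schur

theorem abs_inv_sub_sub_inv_sub_le {a b : ℕ → ℝ} {δ : ℝ} (hδ : 0 < δ)
    (ha : ∀ k n : ℕ, δ * |(k : ℝ) - n| ≤ |a k - a n|)
    (hb : ∀ k n : ℕ, δ * |(k : ℝ) - n| ≤ |b k - b n|)
    (hab : ∀ k n, |(b k - b n) - (a k - a n)| ≤ δ) (k n : ℕ) :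
    |(a k - a n)⁻¹ - (b k - b n)⁻¹| ≤ δ⁻¹ * (((k : ℝ) - n) ^ 2)⁻¹ := by
  rcases eq_or_ne k n with rfl | hkn
  · simp
  have hkn : 0 < |(k : ℝ) - n| := abs_pos.2 (sub_ne_zero.2 (by exact_mod_cast hkn))
  calc _ ≤ δ / (δ * |(k : ℝ) - n|) ^ 2 :=
        abs_inv_sub_inv_le (by positivity) (ha k n) (hb k n) (hab k n)
    _ = δ⁻¹ * (((k : ℝ) - n) ^ 2)⁻¹ := by
        rw [mul_pow, sq_abs]; field_simp

theorem exists_hasSum_inv_sub_sub_inv_sub {a b : ℕ → ℝ} {δ : ℝ} (hδ : 0 < δ)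
    (ha : ∀ k n : ℕ, δ * |(k : ℝ) - n| ≤ |a k - a n|)
    (hb : ∀ k n : ℕ, δ * |(k : ℝ) - n| ≤ |b k - b n|)
    (hab : ∀ k n, |(b k - b n) - (a k - a n)| ≤ δ) :
    ∃ R : lp (fun _ : ℕ => ℂ) 2 →L[ℂ] lp (fun _ : ℕ => ℂ) 2, ‖R‖ ≤ δ⁻¹ * (π ^ 2 / 3) ∧
      ∀ ξ n, HasSum (fun k => (((a k - a n)⁻¹ - (b k - b n)⁻¹ : ℝ) : ℂ) * ξ k) (R ξ n) := by
  have hK (k n : ℕ) :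
      ‖((((a k - a n)⁻¹ - (b k - b n)⁻¹ : ℝ) : ℂ))‖ ≤ δ⁻¹ * (((k : ℝ) - n) ^ 2)⁻¹ := by
    rw [Complex.norm_real, Real.norm_eq_abs]
    exact abs_inv_sub_sub_inv_sub_le hδ ha hb hab k n
  refine lp.exists_hasSum_kernel_of_schur (fun n s => ?_) (fun k s => ?_) (by positivity)
  · calc _ ≤ ∑ k ∈ s, δ⁻¹ * (((k : ℝ) - n) ^ 2)⁻¹ := sum_le_sum fun k _ => hK k n
      _ ≤ δ⁻¹ * (π ^ 2 / 3) := by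
        rw [← mul_sum]; exact mul_le_mul_of_nonneg_left (sum_inv_sq_sub_le n s) (by positivity)
  · calc _ ≤ ∑ n ∈ s, δ⁻¹ * (((n : ℝ) - k) ^ 2)⁻¹ :=
          sum_le_sum fun n _ => by rw [sub_sq_comm]; exact hK k n
      _ ≤ δ⁻¹ * (π ^ 2 / 3) := by
        rw [← mul_sum]; exact mul_le_mul_of_nonneg_left (sum_inv_sq_sub_le k s) (by positivity)

theorem summable_inv_sub_mul_of_abs_sub_le {f : ℕ → ℕ}
    (hf : ∀ k n : ℕ, |(k : ℝ) - n| ≤ |(f k : ℝ) - f n|) (ξ : lp (fun _ : ℕ => ℂ) 2) (n : ℕ) :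
    Summable fun k => ((f k : ℂ) - f n)⁻¹ * ξ k := by
  have hw : Summable fun k : ℕ => (((k : ℝ) - n) ^ 2)⁻¹ :=
    summable_of_sum_le (fun _ => by positivity) (sum_inv_sq_sub_le n)
  refine summable_mul_of_summable_norm_sq (hw.of_nonneg_of_le (fun _ => by positivity)
    fun k => ?_) (lp.summable_norm_sq ξ)
  have hnorm : ‖(f k : ℂ) - f n‖ = |(f k : ℝ) - f n| := by
    rw [← Real.norm_eq_abs, ← Complex.norm_real]; push_cast; rfl
  rw [norm_inv, hnorm, inv_pow, ← sq_abs ((k : ℝ) - n)]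
  rcases eq_or_ne k n with rfl | hkn
  · simp
  have hkn : 0 < |(k : ℝ) - n| := abs_pos.2 (sub_ne_zero.2 (by exact_mod_cast hkn))
  exact inv_anti₀ (by positivity) (pow_le_pow_left₀ hkn.le (hf k n) 2)

section Rounding

variable {a : ℕ → ℝ} {δ : ℝ}

noncomputable def roundIndex (a : ℕ → ℝ) (δ : ℝ) (k : ℕ) : ℕ := ⌈(a k - a 0) / δ⌉₊

variable (hδ : 0 < δ) (hgap : ∀ k, a (k + 1) - a k > δ)
include hδ hgap

theorem roundIndex_error (k : ℕ) :
    a k - a 0 ≤ δ * roundIndex a δ k ∧ δ * roundIndex a δ k < a k - a 0 + δ := by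
  have h0 : 0 ≤ a k - a 0 := le_trans (by simp; positivity)
    (mul_sub_le_sub_of_forall_le_sub_succ (fun k => (hgap k).le) (Nat.zero_le k))
  constructor
  · rw [← div_le_iff₀' hδ]; exact Nat.le_ceil _
  · rw [← lt_div_iff₀' hδ, add_div, div_self hδ.ne']; exact Nat.ceil_lt_add_one (by positivity)

theorem roundIndex_strictMono : StrictMono (roundIndex a δ) := by
  refine strictMono_nat_of_lt_succ fun k => ?_
  have hk := roundIndex_error hδ hgap k
  have hk1 := roundIndex_error hδ hgap (k + 1)
  have : δ * roundIndex a δ k < δ * roundIndex a δ (k + 1) := by linarith [hgap k]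
  exact_mod_cast lt_of_mul_lt_mul_left this hδ.le

theorem abs_sub_le_abs_roundIndex_sub (k n : ℕ) :
    |(k : ℝ) - n| ≤ |(roundIndex a δ k : ℝ) - roundIndex a δ n| := by
  simpa using mul_abs_sub_le_abs_sub_of_forall_le_sub_succ
    (u := fun k => (roundIndex a δ k : ℝ)) (c := 1)
    (fun k => by
      have : roundIndex a δ k + 1 ≤ roundIndex a δ (k + 1) :=
        roundIndex_strictMono hδ hgap k.lt_succ_self
      simp only [le_sub_iff_add_le']; exact_mod_cast this) k n

theorem abs_roundIndex_sub_sub_le (k n : ℕ) :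
    |(δ * roundIndex a δ k - δ * roundIndex a δ n) - (a k - a n)| ≤ δ := by
  have hk := roundIndex_error hδ hgap k
  have hn := roundIndex_error hδ hgap n
  rw [abs_le]; constructor <;> linarith

theorem exists_hasSum_inv_sub_sub_inv_roundIndex_sub :
    ∃ R : lp (fun _ : ℕ => ℂ) 2 →L[ℂ] lp (fun _ : ℕ => ℂ) 2, ‖R‖ ≤ δ⁻¹ * (π ^ 2 / 3) ∧
      ∀ ξ n, HasSum (fun k => (((a k - a n)⁻¹ -
        (δ * roundIndex a δ k - δ * roundIndex a δ n)⁻¹ : ℝ) : ℂ) * ξ k) (R ξ n) :=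
  exists_hasSum_inv_sub_sub_inv_sub (b := fun k => δ * roundIndex a δ k) hδ
    (mul_abs_sub_le_abs_sub_of_forall_le_sub_succ fun k => (hgap k).le)
    (fun k n => by
      rw [← mul_sub, abs_mul, abs_of_pos hδ]
      exact mul_le_mul_of_nonneg_left (abs_sub_le_abs_roundIndex_sub hδ hgap k n) hδ.le)
    (abs_roundIndex_sub_sub_le hδ hgap)

end Rounding

/-- for a real sequence with gaps `a_{k+1} - a_k > δ`, the generalized
discrete Hilbert transform is bounded on ℓ²(ℕ) with norm at most
`(1/δ)(2π²/3 + 2‖G‖)`, where `G` is the standard discrete Hilbert transform. -/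
theorem stmt2 (a : ℕ → ℝ) (δ : ℝ) (hδ : 0 < δ) (hgap : ∀ k, a (k + 1) - a k > δ)
    (G : lp (fun _ : ℕ => ℂ) 2 →L[ℂ] lp (fun _ : ℕ => ℂ) 2)
    (hG : ∀ (ξ : lp (fun _ : ℕ => ℂ) 2) (n : ℕ),
      (G ξ : ∀ _ : ℕ, ℂ) n = ∑' k : {k : ℕ // k ≠ n}, ξ k / (((k : ℕ) : ℂ) - (n : ℂ))) :
    ∃ Ga : lp (fun _ : ℕ => ℂ) 2 →L[ℂ] lp (fun _ : ℕ => ℂ) 2,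
      ‖Ga‖ ≤ (1 / δ) * (2 * Real.pi ^ 2 / 3 + 2 * ‖G‖) ∧
      ∀ (ξ : lp (fun _ : ℕ => ℂ) 2) (n : ℕ),
        (Ga ξ : ∀ _ : ℕ, ℂ) n = ∑' k : {k : ℕ // k ≠ n}, ξ k / ((a k : ℂ) - (a n : ℂ)) := by
  set f := roundIndex a δ
  have hf : f.Injective := (roundIndex_strictMono hδ hgap).injective
  have h2 : 0 < (2 : ℝ≥0∞).toReal := by norm_num
  have hG' (η : lp (fun _ : ℕ => ℂ) 2) (j : ℕ) : G η j = ∑' i : ℕ, ((i : ℂ) - j)⁻¹ * η i := by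
    rw [hG, tsum_ne_div_sub_eq_tsum (fun i : ℕ => (i : ℂ))]
  obtain ⟨R, hR_norm, hR⟩ := exists_hasSum_inv_sub_sub_inv_roundIndex_sub hδ hgap
  refine ⟨(δ⁻¹ : ℂ) • lp.compress h2 hf G + R, ?_, fun ξ n => ?_⟩
  · have hGf : ‖(δ⁻¹ : ℂ) • lp.compress h2 hf G‖ ≤ δ⁻¹ * ‖G‖ := by
      rw [norm_smul, norm_inv, Complex.norm_real, Real.norm_of_nonneg hδ.le]
      exact mul_le_mul_of_nonneg_left (lp.norm_compress_le h2 hf G) (by positivity)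
    calc _ ≤ δ⁻¹ * ‖G‖ + δ⁻¹ * (π ^ 2 / 3) := norm_add_le_of_le hGf hR_norm
      _ ≤ (1 / δ) * (2 * Real.pi ^ 2 / 3 + 2 * ‖G‖) := by
          rw [one_div, ← mul_add]
          exact mul_le_mul_of_nonneg_left (by linarith [norm_nonneg G, sq_nonneg π]) (by positivity)
  · have hsplit (k : ℕ) : ((a k : ℂ) - a n)⁻¹ * ξ k = (δ : ℂ)⁻¹ * (((f k : ℂ) - f n)⁻¹ * ξ k)
        + (((a k - a n)⁻¹ - (δ * f k - δ * f n)⁻¹ : ℝ) : ℂ) * ξ k := by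
      push_cast
      rw [← mul_sub, mul_inv]
      ring
    rw [tsum_ne_div_sub_eq_tsum (fun k => (a k : ℂ)), tsum_congr hsplit,
      Summable.tsum_add ((summable_inv_sub_mul_of_abs_sub_le
        (abs_sub_le_abs_roundIndex_sub hδ hgap) ξ n).mul_left _) (hR ξ n).summable,
      tsum_mul_left, (hR ξ n).tsum_eq, ← lp.compress_apply_of_kernel h2 hf hG']
    rfl
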